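/- The set S_{(s,0)} = { Σ_{k=1}^∞ c_k / s^{c_1+⋯+c_k} : (c_k) ∈ {1,...,s-1}^ℕ } is uncountable; indeed the map sending a sequence (c_k) ∈ {1,...,s-1}^ℕ to Σ_{k=1}^∞ c_k / s^{c_1+⋯+c_k} is injective. -/

import Mathlib

open Finset

/-- The term of the series: `c n / s ^ (c 1 + ... + c (n+1))` (0-indexed). -/
noncomputable def sTerm (s : ℕ) (c : ℕ → ℕ) (n : ℕ) : ℝ :=
  (c n : ℝ) / (s : ℝ) ^ (∑ k ∈ Finset.range (n + 1), c k)

/-- `x = Σ_{k=1}^∞ c_k / s^{c_1+⋯+c_k}`. -/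
noncomputable def sVal (s : ℕ) (c : ℕ → ℕ) : ℝ := ∑' n : ℕ, sTerm s c n

/-- The sequence `(c_k)` has all terms in `{1, ..., s-1}`. -/
def sValid (s : ℕ) (c : ℕ → ℕ) : Prop := ∀ k, 1 ≤ c k ∧ c k ≤ s - 1

/-- The set `S_{(s,0)}`. -/
def Sset (s : ℕ) : Set ℝ := { x | ∃ c : ℕ → ℕ, sValid s c ∧ x = sVal s c }

/-- The cylinder `Δ'_{c_1 ... c_n}` of rank `n` with base the first `n` terms of `c`. -/
def cyl (s n : ℕ) (c : ℕ → ℕ) : Set ℝ :=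
  { x | ∃ c' : ℕ → ℕ, sValid s c' ∧ (∀ k < n, c' k = c k) ∧ x = sVal s c' }

/-- The cylinder `Δ'_{c_1 ... c_n p}`: prefix of length `n` from `c`, next digit `p`. -/
def cylExt (s n : ℕ) (c : ℕ → ℕ) (p : ℕ) : Set ℝ :=
  { x | ∃ c' : ℕ → ℕ, sValid s c' ∧ (∀ k < n, c' k = c k) ∧ c' n = p ∧ x = sVal s c' }

/-- `g_n = Σ_{k=1}^n c_k / s^{c_1+⋯+c_k}`. -/
noncomputable def gPart (s n : ℕ) (c : ℕ → ℕ) : ℝ := ∑ k ∈ Finset.range n, sTerm s c k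

/-!
Writing `c' = (c (n + 1))ₙ` for the shifted sequence, the series satisfies the self-similarity
`x(c) = (c₀ + x(c')) / s ^ c₀`. By Bernoulli's inequality `a (s - 1) + 1 ≤ s ^ a`, this recursion
keeps every value in `[0, 1 / (s - 1)]`, so a sequence with first digit `a ≥ 1` has its value in
`[a / s ^ a, (a + 1 / (s - 1)) / s ^ a]`. For `s ≥ 3` these intervals are disjoint for distinct `a`,
so the value determines the first digit, and by the recursion then every digit. Sequences with
digits in `{1, 2}` then embed `ℕ → Bool` into `S_{(s,0)}`.
-/

section Series

variable {s : ℕ}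

lemma sTerm_nonneg (c : ℕ → ℕ) (n : ℕ) : 0 ≤ sTerm s c n := by
  unfold sTerm; positivity

lemma sTerm_zero (c : ℕ → ℕ) : sTerm s c 0 = c 0 / (s : ℝ) ^ c 0 := by
  simp [sTerm]

lemma sTerm_succ (c : ℕ → ℕ) (n : ℕ) :
    sTerm s c (n + 1) = sTerm s (fun k => c (k + 1)) n / (s : ℝ) ^ c 0 := by
  rw [sTerm, sTerm, sum_range_succ' _ (n + 1), pow_add, div_div, mul_comm]

lemma sum_range_succ_sTerm (c : ℕ → ℕ) (n : ℕ) :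
    ∑ k ∈ range (n + 1), sTerm s c k
      = (c 0 + ∑ k ∈ range n, sTerm s (fun k => c (k + 1)) k) / (s : ℝ) ^ c 0 := by
  rw [sum_range_succ', add_comm, sTerm_zero, add_div, sum_div]
  simp only [sTerm_succ]

lemma sum_range_sTerm_le (hs : 1 < s) (c : ℕ → ℕ) (n : ℕ) :
    ∑ k ∈ range n, sTerm s c k ≤ 1 / ((s : ℝ) - 1) := by
  induction n generalizing c with
  | zero =>
    rw [range_zero, sum_empty]
    exact one_div_nonneg.mpr (sub_nonneg.mpr (by exact_mod_cast hs.le))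
  | succ n ih =>
    have hs1 : (1 : ℝ) < s := by exact_mod_cast hs
    have bernoulli : 1 + (c 0 : ℝ) * ((s : ℝ) - 1) ≤ (s : ℝ) ^ c 0 := by
      simpa using one_add_mul_le_pow (a := (s : ℝ) - 1) (by linarith) (c 0)
    rw [sum_range_succ_sTerm, div_le_iff₀ (by positivity)]
    calc (c 0 : ℝ) + ∑ k ∈ range n, sTerm s (fun k => c (k + 1)) k
        ≤ c 0 + 1 / ((s : ℝ) - 1) := by gcongr; exact ih _
      _ = (1 + c 0 * ((s : ℝ) - 1)) * (1 / ((s : ℝ) - 1)) := by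
        field_simp [(by linarith : (s : ℝ) - 1 ≠ 0)]; ring
      _ ≤ 1 / ((s : ℝ) - 1) * (s : ℝ) ^ c 0 := by
        rw [mul_comm]; gcongr

lemma summable_sTerm (hs : 1 < s) (c : ℕ → ℕ) : Summable (sTerm s c) :=
  summable_of_sum_range_le (sTerm_nonneg c) (sum_range_sTerm_le hs c)

lemma sVal_nonneg (c : ℕ → ℕ) : 0 ≤ sVal s c :=
  tsum_nonneg (sTerm_nonneg c)

lemma sVal_le (hs : 1 < s) (c : ℕ → ℕ) : sVal s c ≤ 1 / ((s : ℝ) - 1) :=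
  Real.tsum_le_of_sum_range_le (sTerm_nonneg c) (sum_range_sTerm_le hs c)

lemma sVal_eq_add_shift_div (hs : 1 < s) (c : ℕ → ℕ) :
    sVal s c = (c 0 + sVal s (fun k => c (k + 1))) / (s : ℝ) ^ c 0 := by
  rw [sVal, (summable_sTerm hs c).tsum_eq_zero_add, add_div, sTerm_zero, sVal, ← tsum_div_const]
  simp only [sTerm_succ]

lemma add_one_div_sub_one_div_pow_lt (hs : 2 < s) {a b : ℕ} (ha : 1 ≤ a) (hab : a < b) :
    (b + 1 / ((s : ℝ) - 1)) / (s : ℝ) ^ b < a / (s : ℝ) ^ a := by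
  obtain ⟨m, rfl⟩ : ∃ m, b = a + m := ⟨b - a, by omega⟩
  have hs3 : (3 : ℝ) ≤ s := by exact_mod_cast hs
  have ha1 : (1 : ℝ) ≤ a := by exact_mod_cast ha
  have hm1 : (1 : ℝ) ≤ m := by exact_mod_cast (by omega : 1 ≤ m)
  have bernoulli : 1 + (m : ℝ) * ((s : ℝ) - 1) ≤ (s : ℝ) ^ m := by
    simpa using one_add_mul_le_pow (a := (s : ℝ) - 1) (by linarith) m
  have tail_small : 1 / ((s : ℝ) - 1) < m := by
    rw [div_lt_iff₀ (by linarith)]; nlinarith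
  have key : (a + m : ℝ) + 1 / ((s : ℝ) - 1) < a * (s : ℝ) ^ m :=
    calc (a + m : ℝ) + 1 / ((s : ℝ) - 1) < a + m * ((s : ℝ) - 1) := by nlinarith
      _ ≤ a * (1 + m * ((s : ℝ) - 1)) := by
        nlinarith [mul_nonneg (sub_nonneg.mpr ha1) (by nlinarith : (0 : ℝ) ≤ m * ((s : ℝ) - 1))]
      _ ≤ a * (s : ℝ) ^ m := by gcongr
  rw [div_lt_div_iff₀ (by positivity) (by positivity), pow_add]
  push_cast
  nlinarith [pow_pos (by linarith : (0 : ℝ) < s) a]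

lemma sVal_lt_sVal_of_head_lt (hs : 2 < s) {c d : ℕ → ℕ} (hc : 1 ≤ c 0) (hcd : c 0 < d 0) :
    sVal s d < sVal s c := by
  have hs1 : 1 < s := by omega
  calc sVal s d = (d 0 + sVal s (fun k => d (k + 1))) / (s : ℝ) ^ d 0 :=
        sVal_eq_add_shift_div hs1 d
    _ ≤ (d 0 + 1 / ((s : ℝ) - 1)) / (s : ℝ) ^ d 0 := by gcongr; exact sVal_le hs1 _
    _ < c 0 / (s : ℝ) ^ c 0 := add_one_div_sub_one_div_pow_lt hs hc hcd
    _ ≤ (c 0 + sVal s (fun k => c (k + 1))) / (s : ℝ) ^ c 0 := by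
      gcongr; exact le_add_of_nonneg_right (sVal_nonneg _)
    _ = sVal s c := (sVal_eq_add_shift_div hs1 c).symm

lemma head_eq_of_sVal_eq (hs : 2 < s) {c d : ℕ → ℕ} (hc : 1 ≤ c 0) (hd : 1 ≤ d 0)
    (h : sVal s c = sVal s d) : c 0 = d 0 := by
  rcases lt_trichotomy (c 0) (d 0) with hcd | hcd | hdc
  · exact absurd h (sVal_lt_sVal_of_head_lt hs hc hcd).ne'
  · exact hcd
  · exact absurd h (sVal_lt_sVal_of_head_lt hs hd hdc).ne

lemma eq_of_sVal_eq (hs : 2 < s) {c d : ℕ → ℕ} (hc : ∀ k, 1 ≤ c k) (hd : ∀ k, 1 ≤ d k)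
    (h : sVal s c = sVal s d) : c = d := by
  funext n
  induction n generalizing c d with
  | zero => exact head_eq_of_sVal_eq hs (hc 0) (hd 0) h
  | succ n ih =>
    have head := head_eq_of_sVal_eq hs (hc 0) (hd 0) h
    have hpow : (s : ℝ) ^ d 0 ≠ 0 := pow_ne_zero _ (by positivity)
    rw [sVal_eq_add_shift_div (by omega) c, sVal_eq_add_shift_div (by omega) d, head,
      div_left_inj' hpow, add_right_inj] at h
    exact ih (fun k => hc (k + 1)) (fun k => hd (k + 1)) h

end Series

lemma uncountable_nat_to_bool : Uncountable (ℕ → Bool) := by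
  rw [← Cardinal.aleph0_lt_mk_iff, ← Cardinal.power_def, Cardinal.mk_bool, Cardinal.mk_nat]
  exact Cardinal.cantor _

theorem stmt2 (s : ℕ) (hs : 2 < s) :
    (∀ c d : ℕ → ℕ, sValid s c → sValid s d → sVal s c = sVal s d → c = d) ∧
      ¬ (Sset s).Countable := by
  have sVal_inj : ∀ c d : ℕ → ℕ, sValid s c → sValid s d → sVal s c = sVal s d → c = d :=
    fun c d hc hd => eq_of_sVal_eq hs (fun k => (hc k).1) (fun k => (hd k).1)
  refine ⟨sVal_inj, fun hcount => ?_⟩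
  let digits (b : ℕ → Bool) : ℕ → ℕ := fun n => 1 + (b n).toNat
  have digits_valid (b : ℕ → Bool) : sValid s (digits b) := fun k => by
    show 1 ≤ 1 + (b k).toNat ∧ 1 + (b k).toNat ≤ s - 1
    have := Bool.toNat_le (b k)
    omega
  have digits_inj : Function.Injective digits := fun b b' hbb' => funext fun n => by
    have := congrFun hbb' n
    cases hb : b n <;> cases hb' : b' n <;> simp_all [digits]
  let embed (b : ℕ → Bool) : Sset s := ⟨sVal s (digits b), digits b, digits_valid b, rfl⟩
  have embed_inj : Function.Injective embed := fun b b' h =>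
    digits_inj (sVal_inj _ _ (digits_valid b) (digits_valid b') (congrArg Subtype.val h))
  have := hcount.to_subtype
  exact uncountable_nat_to_bool.not_countable embed_inj.countable
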